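/- arXiv:1703.04547 — 2 statements merged into one kernel-verified Lean document; each statement's English description precedes it below -/
import Mathlib

section
/- (Condition number theorem) Let A ∈ ℝ^{n×n} be nonzero and let 1 ≤ r, s ≤ ∞. Then κ_{rs}(A) = ‖A‖_{rs} / d_{rs}(A, Σ), where κ_{rs}(A) = ‖A‖_{rs}‖A⁻¹‖_{sr} if A is invertible and κ_{rs}(A) = ∞ if A is singular (interpreted in the extended reals). -/
/-!
Identify a matrix with the operator `ℓ^r → ℓ^s` it induces, so that `‖·‖_{rs}` becomes Mathlib's
operator norm. Let `T` be invertible with inverse `B`. If `S` kills some `v ≠ 0`, then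
`‖v‖ = ‖B ((T - S) v)‖ ≤ ‖B‖ ‖T - S‖ ‖v‖`, so `‖T - S‖ ≥ ‖B‖⁻¹`. Conversely, choose `y` with
`‖B y‖ / ‖y‖` close to `‖B‖` and put `u = B y`: Hahn–Banach gives a rank-one `D` with `D u = y`
and `‖D‖ = ‖y‖ / ‖u‖`, and `T - D` kills `u`. Hence `d(A, Σ) = ‖A⁻¹‖⁻¹`; for singular `A` the
distance is `0`, attained at `E = A`.
-/

open scoped ENNReal
open MeasureTheory ProbabilityTheory Filter Topology

/-- The ℓ^p norm on ℝ^n. -/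
noncomputable def lpNorm {n : ℕ} (p : ℝ≥0∞) (x : Fin n → ℝ) : ℝ :=
  ‖(show PiLp p (fun _ : Fin n => ℝ) from WithLp.toLp p x)‖

/-- The operator norm ‖B‖_{rs} = sup_{x ≠ 0} ‖Bx‖_s / ‖x‖_r of a matrix
B : ℝ^{n×m}, where the domain ℝ^m carries the ℓ^r norm and the codomain ℝ^n
carries the ℓ^s norm. -/
noncomputable def opNorm {n m : ℕ} (r s : ℝ≥0∞) (B : Matrix (Fin n) (Fin m) ℝ) : ℝ :=
  sSup {c : ℝ | ∃ x : Fin m → ℝ, x ≠ 0 ∧ c = lpNorm s (B.mulVec x) / lpNorm r x}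

namespace ContinuousLinearMap

section NormedField
variable {𝕜 E F : Type*} [NontriviallyNormedField 𝕜] [NormedAddCommGroup E] [NormedSpace 𝕜 E]
  [NormedAddCommGroup F] [NormedSpace 𝕜 F]

theorem sSup_ratio_eq_norm (f : E →L[𝕜] F) :
    sSup {c : ℝ | ∃ x : E, x ≠ 0 ∧ c = ‖f x‖ / ‖x‖} = ‖f‖ := by
  set R := {c : ℝ | ∃ x : E, x ≠ 0 ∧ c = ‖f x‖ / ‖x‖}
  have hR : ∀ c ∈ R, c ≤ ‖f‖ := by
    rintro c ⟨x, -, rfl⟩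
    exact f.ratio_le_opNorm x
  refine le_antisymm (Real.sSup_le hR (norm_nonneg f)) (f.opNorm_le_bound ?_ fun x => ?_)
  · exact Real.sSup_nonneg fun c ⟨x, _, hc⟩ => hc ▸ by positivity
  · rcases eq_or_ne x 0 with rfl | hx
    · simp
    · rw [← div_le_iff₀ (norm_pos_iff.mpr hx)]
      exact le_csSup ⟨_, hR⟩ ⟨x, hx, rfl⟩

theorem inv_norm_le_norm_sub_of_apply_eq_zero {T S : E →L[𝕜] F} {B : F →L[𝕜] E}
    (hB : ∀ x, B (T x) = x) {v : E} (hv : v ≠ 0) (hSv : S v = 0) : ‖B‖⁻¹ ≤ ‖T - S‖ := by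
  have hbound : 1 * ‖v‖ ≤ ‖B‖ * ‖T - S‖ * ‖v‖ :=
    calc 1 * ‖v‖ = ‖B ((T - S) v)‖ := by simp [hSv, hB]
      _ ≤ ‖B‖ * ‖(T - S) v‖ := B.le_opNorm _
      _ ≤ ‖B‖ * (‖T - S‖ * ‖v‖) := by gcongr; exact (T - S).le_opNorm v
      _ = ‖B‖ * ‖T - S‖ * ‖v‖ := by ring
  have hone : 1 ≤ ‖B‖ * ‖T - S‖ := le_of_mul_le_mul_right hbound (norm_pos_iff.mpr hv)
  have hB0 : 0 < ‖B‖ := pos_of_mul_pos_left (one_pos.trans_le hone) (norm_nonneg _)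
  exact (inv_le_iff_one_le_mul₀' hB0).mpr hone

end NormedField

section RCLike
variable {𝕜 E F : Type*} [RCLike 𝕜] [NormedAddCommGroup E] [NormedSpace 𝕜 E]
  [NormedAddCommGroup F] [NormedSpace 𝕜 F]

theorem exists_apply_eq_and_norm_eq {u : E} (hu : u ≠ 0) (y : F) :
    ∃ D : E →L[𝕜] F, D u = y ∧ ‖D‖ = ‖y‖ / ‖u‖ := by
  have hu' : ‖u‖ ≠ 0 := norm_ne_zero_iff.mpr hu
  obtain ⟨g, hg, hgu⟩ := exists_dual_vector 𝕜 u hu'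
  refine ⟨((‖u‖⁻¹ : ℝ) : 𝕜) • g.smulRight y, ?_, ?_⟩
  · simp [hgu, smul_smul, hu']
  · rw [norm_smul, norm_smulRight_apply, hg, RCLike.norm_ofReal, abs_inv, abs_norm]
    ring

theorem exists_not_injective_norm_sub_lt [Nontrivial F] {T : E →L[𝕜] F} {B : F →L[𝕜] E}
    (hB : ∀ y, T (B y) = y) {w : ℝ} (hw : ‖B‖⁻¹ < w) :
    ∃ S : E →L[𝕜] F, ¬ Function.Injective S ∧ ‖T - S‖ < w := by
  have hB0 : B ≠ 0 := by
    obtain ⟨y, hy⟩ := exists_ne (0 : F)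
    intro h
    exact hy (by simpa [h] using (hB y).symm)
  have hBpos : 0 < ‖B‖ := norm_pos_iff.mpr hB0
  have hw0 : 0 < w := (inv_pos.mpr hBpos).trans hw
  obtain ⟨y, hy1, hy⟩ := B.exists_lt_apply_of_lt_opNorm ((inv_lt_comm₀ hBpos hw0).mp hw)
  have hu : 0 < ‖B y‖ := (inv_pos.mpr hw0).trans hy
  obtain ⟨D, hDu, hD⟩ := exists_apply_eq_and_norm_eq (𝕜 := 𝕜) (norm_pos_iff.mp hu) y
  refine ⟨T - D, fun hinj => norm_pos_iff.mp hu (hinj ?_), ?_⟩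
  · simp [hDu, hB]
  · rw [sub_sub_cancel, hD, div_lt_iff₀ hu]
    calc ‖y‖ < 1 := hy1
      _ = w * w⁻¹ := (mul_inv_cancel₀ hw0.ne').symm
      _ < w * ‖B y‖ := by gcongr

theorem sInf_norm_sub_not_injective [Nontrivial F] {T : E →L[𝕜] F} {B : F →L[𝕜] E}
    (hBT : ∀ x, B (T x) = x) (hTB : ∀ y, T (B y) = y) :
    sInf {c : ℝ | ∃ S : E →L[𝕜] F, ¬ Function.Injective S ∧ c = ‖T - S‖} = ‖B‖⁻¹ := by
  obtain ⟨S₀, hS₀, -⟩ := exists_not_injective_norm_sub_lt hTB (lt_add_one ‖B‖⁻¹)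
  refine csInf_eq_of_forall_ge_of_forall_gt_exists_lt ⟨_, S₀, hS₀, rfl⟩ ?_ fun w hw => ?_
  · rintro c ⟨S, hS, rfl⟩
    obtain ⟨v, hSv, hv⟩ : ∃ v, S v = 0 ∧ v ≠ 0 := by
      simpa [injective_iff_map_eq_zero, not_forall] using hS
    exact inv_norm_le_norm_sub_of_apply_eq_zero hBT hv hSv
  · obtain ⟨S, hS, hlt⟩ := exists_not_injective_norm_sub_lt hTB hw
    exact ⟨_, ⟨S, hS, rfl⟩, hlt⟩

end RCLike

end ContinuousLinearMap

namespace Matrix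

variable {n m : ℕ} (r s : ℝ≥0∞) [Fact (1 ≤ r)] [Fact (1 ≤ s)]

noncomputable def toPiLpCLM :
    Matrix (Fin n) (Fin m) ℝ ≃ₗ[ℝ]
      (PiLp r (fun _ : Fin m => ℝ) →L[ℝ] PiLp s (fun _ : Fin n => ℝ)) :=
  Matrix.toLin'.trans <|
    ((WithLp.linearEquiv r ℝ _).symm.arrowCongr (WithLp.linearEquiv s ℝ _).symm).trans
      LinearMap.toContinuousLinearMap

@[simp]
theorem toPiLpCLM_toLp (B : Matrix (Fin n) (Fin m) ℝ) (x : Fin m → ℝ) :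
    toPiLpCLM r s B (WithLp.toLp r x) = WithLp.toLp s (B *ᵥ x) := rfl

theorem opNorm_eq_norm_toPiLpCLM (B : Matrix (Fin n) (Fin m) ℝ) :
    opNorm r s B = ‖toPiLpCLM r s B‖ := by
  rw [← (toPiLpCLM r s B).sSup_ratio_eq_norm, opNorm]
  congr 1
  ext c
  constructor
  · rintro ⟨x, hx, rfl⟩
    exact ⟨WithLp.toLp r x, by simpa using hx, rfl⟩
  · rintro ⟨x, hx, rfl⟩
    exact ⟨x.ofLp, by simpa using hx, rfl⟩

theorem opNorm_pos {B : Matrix (Fin n) (Fin m) ℝ} (hB : B ≠ 0) : 0 < opNorm r s B := by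
  rw [opNorm_eq_norm_toPiLpCLM, norm_pos_iff, map_ne_zero_iff _ (toPiLpCLM r s).injective]
  exact hB

theorem opNorm_nonneg (B : Matrix (Fin n) (Fin m) ℝ) : 0 ≤ opNorm r s B :=
  (opNorm_eq_norm_toPiLpCLM r s B).symm ▸ norm_nonneg _

variable {r s}

theorem injective_toPiLpCLM_iff {A : Matrix (Fin n) (Fin n) ℝ} :
    Function.Injective (toPiLpCLM r s A) ↔ IsUnit A.det := by
  rw [← isUnit_iff_isUnit_det, ← mulVec_injective_iff_isUnit]
  constructor
  · intro h x y hxy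
    simpa using @h (WithLp.toLp r x) (WithLp.toLp r y) (by simp [hxy])
  · rintro h ⟨x⟩ ⟨y⟩ hxy
    simpa using h (by simpa using hxy)

theorem toPiLpCLM_nonsing_inv_apply_apply {A : Matrix (Fin n) (Fin n) ℝ} (hA : IsUnit A.det)
    (x : PiLp r (fun _ : Fin n => ℝ)) : toPiLpCLM s r A⁻¹ (toPiLpCLM r s A x) = x := by
  cases x
  simp [mulVec_mulVec, nonsing_inv_mul A hA]

theorem toPiLpCLM_apply_nonsing_inv_apply {A : Matrix (Fin n) (Fin n) ℝ} (hA : IsUnit A.det)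
    (y : PiLp s (fun _ : Fin n => ℝ)) : toPiLpCLM r s A (toPiLpCLM s r A⁻¹ y) = y := by
  cases y
  simp [mulVec_mulVec, mul_nonsing_inv A hA]

theorem sInf_opNorm_sub_singular_of_isUnit [NeZero n] {A : Matrix (Fin n) (Fin n) ℝ}
    (hA : IsUnit A.det) :
    sInf {c : ℝ | ∃ E : Matrix (Fin n) (Fin n) ℝ, ¬ IsUnit E.det ∧ c = opNorm r s (A - E)}
      = (opNorm s r A⁻¹)⁻¹ := by
  rw [opNorm_eq_norm_toPiLpCLM s r A⁻¹, ← ContinuousLinearMap.sInf_norm_sub_not_injective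
    (toPiLpCLM_nonsing_inv_apply_apply hA) (toPiLpCLM_apply_nonsing_inv_apply hA)]
  congr 1
  ext c
  constructor
  · rintro ⟨E, hE, rfl⟩
    exact ⟨toPiLpCLM r s E, by rwa [injective_toPiLpCLM_iff], by
      rw [opNorm_eq_norm_toPiLpCLM, map_sub]⟩
  · rintro ⟨S, hS, rfl⟩
    obtain ⟨E, rfl⟩ := (toPiLpCLM r s).surjective S
    exact ⟨E, by rwa [injective_toPiLpCLM_iff] at hS, by rw [opNorm_eq_norm_toPiLpCLM, map_sub]⟩

theorem sInf_opNorm_sub_singular_of_not_isUnit {A : Matrix (Fin n) (Fin n) ℝ}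
    (hA : ¬ IsUnit A.det) :
    sInf {c : ℝ | ∃ E : Matrix (Fin n) (Fin n) ℝ, ¬ IsUnit E.det ∧ c = opNorm r s (A - E)} = 0 := by
  refine IsLeast.csInf_eq ⟨⟨A, hA, ?_⟩, ?_⟩
  · rw [sub_self, opNorm_eq_norm_toPiLpCLM, map_zero, norm_zero]
  · rintro c ⟨E, -, rfl⟩
    exact opNorm_nonneg r s _

end Matrix

open scoped Classical

/-- Condition number theorem: for nonzero A, κ_{rs}(A) = ‖A‖_{rs} / d_{rs}(A, Σ)
in the extended reals, where κ_{rs}(A) = ‖A‖_{rs}‖A⁻¹‖_{sr} if A is invertible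
and κ_{rs}(A) = ∞ otherwise, and d_{rs}(A, Σ) is the distance from A to the set
Σ of singular matrices in the ‖·‖_{rs} operator norm. -/
theorem condition_number_theorem (n : ℕ) (r s : ℝ≥0∞) (hr : 1 ≤ r) (hs : 1 ≤ s)
    (A : Matrix (Fin n) (Fin n) ℝ) (hA : A ≠ 0) :
    (if IsUnit A.det then ENNReal.ofReal (opNorm r s A * opNorm s r A⁻¹) else (⊤ : ℝ≥0∞))
      = ENNReal.ofReal (opNorm r s A) /
          ENNReal.ofReal (sInf {c : ℝ | ∃ E : Matrix (Fin n) (Fin n) ℝ,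
            ¬ IsUnit E.det ∧ c = opNorm r s (A - E)}) := by
  have : Fact (1 ≤ r) := ⟨hr⟩
  have : Fact (1 ≤ s) := ⟨hs⟩
  split_ifs with hdet
  · have : NeZero n := ⟨by rintro rfl; exact hA (Subsingleton.elim _ _)⟩
    have hinv : 0 < opNorm s r A⁻¹ :=
      Matrix.opNorm_pos s r ((Matrix.isUnit_nonsing_inv_iff.mpr
        (A.isUnit_iff_isUnit_det.mpr hdet)).ne_zero)
    rw [Matrix.sInf_opNorm_sub_singular_of_isUnit hdet,
      ← ENNReal.ofReal_div_of_pos (inv_pos.mpr hinv), div_inv_eq_mul]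
  · rw [Matrix.sInf_opNorm_sub_singular_of_not_isUnit hdet, ENNReal.ofReal_zero,
      ENNReal.div_zero (by simpa using Matrix.opNorm_pos r s hA)]
end

section
/- Let n ≥ 1 and let L be a random n×n unit lower triangular matrix whose strictly lower triangular entries ℓ_{ij} (i > j) are independent standard Gaussian random variables, ℓ_{ii} = 1, and ℓ_{ij} = 0 for i < j. Then E[‖L⁻¹‖_F²] = 2ⁿ − 1, where ‖·‖_F is the Frobenius norm. -/
open scoped ENNReal
open MeasureTheory ProbabilityTheory Filter Topology

/-- The Frobenius norm of a square matrix. -/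
noncomputable def frobNorm {n : ℕ} (M : Matrix (Fin n) (Fin n) ℝ) : ℝ :=
  Real.sqrt (∑ i, ∑ j, (M i j)^2)

/-- The unit lower triangular matrix with strictly lower triangular entries
given by `g` and unit diagonal. -/
noncomputable def unitLT (n : ℕ) (g : {p : Fin n × Fin n // p.2 < p.1} → ℝ) :
    Matrix (Fin n) (Fin n) ℝ :=
  fun i j => if i = j then 1 else if h : j < i then g ⟨(i, j), h⟩ else 0

/-- The product of standard Gaussian measures over the strictly lower
triangular index set. -/
noncomputable def gaussianUnitLT (n : ℕ) :
    Measure ({p : Fin n × Fin n // p.2 < p.1} → ℝ) :=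
  Measure.pi fun _ => gaussianReal 0 1

/-!
Write `M = L⁻¹` and let `rᵢ` be its rows. Reading off row `i` of `L M = 1` gives
`rᵢ = eᵢ - ∑_{k<i} ℓᵢₖ rₖ`, and `r₀, …, rᵢ₋₁` only involve the entries of `L` in rows `< i`.
The `ℓᵢₖ` are centred with unit variance and independent of those rows, so all cross terms
vanish in expectation and `E‖rᵢ‖² = 1 + ∑_{k<i} E‖rₖ‖² = 2ⁱ`; summing over `i` gives `2ⁿ - 1`.

To make the independence computable, the entries of `M` are the evaluations of the entries of the
inverse of the generic unit lower triangular matrix over `MvPolynomial`, and polynomials are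
integrated against the product measure monomial by monomial.
-/

open scoped NNReal

namespace ProbabilityTheory

lemma integrable_pow_gaussianReal (μ : ℝ) (v : ℝ≥0) (k : ℕ) :
    Integrable (fun x => x ^ k) (gaussianReal μ v) :=
  integrable_pow_of_mem_interior_integrableExpSet (by simp [integrableExpSet_fun_id_gaussianReal]) k

lemma integral_sq_gaussianReal (μ : ℝ) (v : ℝ≥0) :
    ∫ x, x ^ 2 ∂gaussianReal μ v = v + μ ^ 2 := by
  have h := variance_eq_sub (memLp_id_gaussianReal (μ := μ) (v := v) 2)
  simp only [variance_id_gaussianReal, Pi.pow_apply, id_eq, integral_id_gaussianReal] at h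
  linarith

end ProbabilityTheory

lemma Fin.sum_two_pow_lt {n : ℕ} (i : Fin n) :
    ∑ k : {k // k < i}, (2 : ℝ) ^ (k : ℕ) = 2 ^ (i : ℕ) - 1 := by
  have h := Finset.sum_map (Finset.Iio i) Fin.valEmbedding (fun m => (2 : ℝ) ^ m)
  rw [Fin.map_valEmbedding_Iio, Nat.Iio_eq_range, geom_sum_eq (by norm_num)] at h
  rw [← Finset.sum_subtype (Finset.Iio i) (fun _ => Finset.mem_Iio)
    (fun k : Fin n => (2 : ℝ) ^ (k : ℕ))]
  norm_num at h
  exact h.symm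

namespace MvPolynomial

section EvalIntegral

variable {ι : Type*} [Fintype ι] (ν : Measure ℝ) [IsProbabilityMeasure ν]

lemma integrable_eval (hν : ∀ k : ℕ, Integrable (fun x => x ^ k) ν)
    (P : MvPolynomial ι ℝ) :
    Integrable (fun g => eval g P) (Measure.pi fun _ : ι => ν) := by
  induction P using MvPolynomial.induction_on' with
  | monomial m c =>
    simp_rw [eval_monomial, Finsupp.prod_fintype _ _ fun p => pow_zero _]
    exact (Integrable.fintype_prod fun p => hν (m p)).const_mul c
  | add P Q hP hQ =>
    simp only [map_add]
    exact hP.add hQ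

noncomputable def evalIntegral (hν : ∀ k : ℕ, Integrable (fun x => x ^ k) ν) :
    MvPolynomial ι ℝ →ₗ[ℝ] ℝ where
  toFun P := ∫ g, eval g P ∂(Measure.pi fun _ : ι => ν)
  map_add' P Q := by
    simp_rw [map_add]
    exact integral_add (integrable_eval ν hν P) (integrable_eval ν hν Q)
  map_smul' c P := by
    simp_rw [smul_eval, RingHom.id_apply, smul_eq_mul]
    exact integral_const_mul c _

variable {ν} (hν : ∀ k : ℕ, Integrable (fun x => x ^ k) ν)

lemma evalIntegral_apply (P : MvPolynomial ι ℝ) :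
    evalIntegral ν hν P = ∫ g, eval g P ∂(Measure.pi fun _ : ι => ν) := rfl

lemma evalIntegral_C (c : ℝ) : evalIntegral ν hν (C c : MvPolynomial ι ℝ) = c := by
  simp [evalIntegral_apply]

lemma evalIntegral_monomial (m : ι →₀ ℕ) (c : ℝ) :
    evalIntegral ν hν (monomial m c) = c * ∏ p, ∫ x, x ^ m p ∂ν := by
  simp_rw [evalIntegral_apply, eval_monomial, Finsupp.prod_fintype _ _ fun p => pow_zero _,
    integral_const_mul, integral_fintype_prod_eq_prod (fun p (x : ℝ) => x ^ m p)]

lemma evalIntegral_monomial_single_add {p : ι} {m : ι →₀ ℕ} (hmp : m p = 0)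
    (a : ℕ) (c : ℝ) :
    evalIntegral ν hν (monomial (Finsupp.single p a + m) c) =
      (∫ x, x ^ a ∂ν) * evalIntegral ν hν (monomial m c) := by
  classical
  have hrest : ∏ q ∈ Finset.univ.erase p, ∫ x, x ^ (Finsupp.single p a + m) q ∂ν =
      ∏ q ∈ Finset.univ.erase p, ∫ x, x ^ m q ∂ν :=
    Finset.prod_congr rfl fun q hq => by simp [Finset.ne_of_mem_erase hq]
  rw [evalIntegral_monomial, evalIntegral_monomial,
    ← Finset.mul_prod_erase _ _ (Finset.mem_univ p),
    ← Finset.mul_prod_erase _ (fun q => ∫ x, x ^ m q ∂ν) (Finset.mem_univ p), hrest]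
  simp only [Finsupp.coe_add, Pi.add_apply, Finsupp.single_eq_same, hmp, add_zero, pow_zero,
    integral_const, probReal_univ, smul_eq_mul, mul_one, one_mul]
  ring

lemma evalIntegral_X_pow_mul {p : ι} {Q : MvPolynomial ι ℝ} (hp : p ∉ Q.vars) (a : ℕ) :
    evalIntegral ν hν (X p ^ a * Q) = (∫ x, x ^ a ∂ν) * evalIntegral ν hν Q := by
  classical
  rw [Q.as_sum, Finset.mul_sum, map_sum, map_sum, Finset.mul_sum]
  refine Finset.sum_congr rfl fun m hm => ?_
  have hmp : m p = 0 := by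
    by_contra h
    exact hp ((mem_vars_iff_mem_support p).mpr ⟨m, hm, Finsupp.mem_support_iff.mpr h⟩)
  rw [X_pow_eq_monomial, monomial_mul, one_mul, evalIntegral_monomial_single_add hν hmp]

variable {κ : Type*} {v : κ → ι} {Q : κ → MvPolynomial ι ℝ}

lemma evalIntegral_X_mul_X_mul [DecidableEq κ] (hmean : ∫ x, x ∂ν = 0)
    (hsq : ∫ x, x ^ 2 ∂ν = 1)
    (hv : Function.Injective v) (hQ : ∀ k l, v k ∉ (Q l).vars) (k l : κ) :
    evalIntegral ν hν (X (v k) * Q k * (X (v l) * Q l)) =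
      if k = l then evalIntegral ν hν (Q k ^ 2) else 0 := by
  classical
  split_ifs with hkl
  · subst hkl
    rw [show X (v k) * Q k * (X (v k) * Q k) = X (v k) ^ 2 * Q k ^ 2 by ring,
      evalIntegral_X_pow_mul hν (fun h => hQ k k (vars_pow _ _ h)), hsq, one_mul]
  · have hk : v k ∉ (X (v l) * (Q k * Q l)).vars := by
      intro h
      rcases Finset.mem_union.mp (vars_mul _ _ h) with h | h
      · rw [vars_X, Finset.mem_singleton] at h
        exact hkl (hv h)
      rcases Finset.mem_union.mp (vars_mul _ _ h) with h | h
      · exact hQ k k h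
      · exact hQ k l h
    rw [show X (v k) * Q k * (X (v l) * Q l) = X (v k) ^ 1 * (X (v l) * (Q k * Q l)) by ring,
      evalIntegral_X_pow_mul hν hk]
    simp only [pow_one, hmean, zero_mul]

lemma evalIntegral_sq_C_sub_sum_X_mul [Fintype κ] (hmean : ∫ x, x ∂ν = 0)
    (hsq : ∫ x, x ^ 2 ∂ν = 1)
    (hv : Function.Injective v) (hQ : ∀ k l, v k ∉ (Q l).vars) (c : ℝ) :
    evalIntegral ν hν ((C c - ∑ k, X (v k) * Q k) ^ 2) =
      c ^ 2 + ∑ k, evalIntegral ν hν (Q k ^ 2) := by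
  classical
  have hlinear (k : κ) : evalIntegral ν hν (X (v k) * Q k) = 0 := by
    simpa [hmean] using evalIntegral_X_pow_mul hν (hQ k k) 1
  have hexpand : (C c - ∑ k, X (v k) * Q k) ^ 2 = C (c ^ 2) - C (2 * c) * ∑ k, X (v k) * Q k +
      ∑ k, ∑ l, X (v k) * Q k * (X (v l) * Q l) := by
    rw [← Finset.sum_mul_sum, map_pow, map_mul, map_ofNat]
    ring
  simp_rw [hexpand, map_add, map_sub, C_mul', map_smul, evalIntegral_C, map_sum, hlinear,
    evalIntegral_X_mul_X_mul hν hmean hsq hv hQ, Finset.sum_ite_eq, Finset.mem_univ, if_true]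
  simp

end EvalIntegral

section GenericUnitLT

variable (n : ℕ)

noncomputable def genericUnitLT :
    Matrix (Fin n) (Fin n) (MvPolynomial {p : Fin n × Fin n // p.2 < p.1} ℝ) :=
  fun i j => if i = j then 1 else if h : j < i then X ⟨(i, j), h⟩ else 0

lemma map_genericUnitLT (g : {p : Fin n × Fin n // p.2 < p.1} → ℝ) :
    (genericUnitLT n).map (eval g) = unitLT n g := by
  ext i j
  simp only [genericUnitLT, unitLT, Matrix.map_apply]
  split_ifs <;> simp

lemma det_genericUnitLT : (genericUnitLT n).det = 1 := by
  rw [Matrix.det_of_isLowerTriangular]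
  · simp [genericUnitLT]
  · intro i j hji
    have hij : i < j := OrderDual.toDual_lt_toDual.mp hji
    simp [genericUnitLT, hij.ne, not_lt_of_gt hij]

lemma genericUnitLT_mul_inv : genericUnitLT n * (genericUnitLT n)⁻¹ = 1 :=
  Matrix.mul_nonsing_inv _ (by simp [det_genericUnitLT])

lemma inv_unitLT (g : {p : Fin n × Fin n // p.2 < p.1} → ℝ) :
    (unitLT n g)⁻¹ = (genericUnitLT n)⁻¹.map (eval g) := by
  refine Matrix.inv_eq_right_inv ?_
  rw [← map_genericUnitLT, ← Matrix.map_mul, genericUnitLT_mul_inv,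
    Matrix.map_one _ (map_zero _) (map_one _)]

lemma inv_genericUnitLT_apply (i j : Fin n) :
    (genericUnitLT n)⁻¹ i j = C (if i = j then 1 else 0) -
      ∑ k : {k // k < i}, X ⟨(i, k.1), k.2⟩ * (genericUnitLT n)⁻¹ k j := by
  have h := congrFun (congrFun (genericUnitLT_mul_inv n) i) j
  rw [Matrix.mul_apply, ← Fintype.sum_subtype_add_sum_subtype (· < i)] at h
  have hlower : ∑ k : {k // k < i}, genericUnitLT n i k * (genericUnitLT n)⁻¹ k j =
      ∑ k : {k // k < i}, X ⟨(i, k.1), k.2⟩ * (genericUnitLT n)⁻¹ k j :=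
    Fintype.sum_congr _ _ fun k => by simp [genericUnitLT, k.2.ne', k.2]
  have hdiag : ∑ k : {k // ¬ k < i}, genericUnitLT n i k * (genericUnitLT n)⁻¹ k j =
      (genericUnitLT n)⁻¹ i j := by
    rw [Fintype.sum_eq_single ⟨i, lt_irrefl i⟩]
    · simp [genericUnitLT]
    · intro k hk
      have hik : i < k := lt_of_le_of_ne (not_lt.mp k.2) fun h => hk (Subtype.ext h.symm)
      simp [genericUnitLT, hik.ne, not_lt_of_gt hik]
  rw [hlower, hdiag, Matrix.one_apply] at h
  rw [apply_ite C, map_one, map_zero, ← h]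
  ring

lemma inv_genericUnitLT_mem_supported (i j : Fin n) :
    (genericUnitLT n)⁻¹ i j ∈ supported ℝ {p | p.1.1 ≤ i} := by
  induction i using WellFoundedLT.induction with
  | _ i ih =>
    rw [inv_genericUnitLT_apply]
    refine Subalgebra.sub_mem _ (Subalgebra.algebraMap_mem _ _) (Subalgebra.sum_mem _ fun k _ => ?_)
    exact Subalgebra.mul_mem _ (X_mem_supported.mpr (Set.mem_ofPred.mpr le_rfl))
      (supported_mono (fun p hp => le_trans hp k.2.le) (ih k k.2))

variable {ν : Measure ℝ} [IsProbabilityMeasure ν]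
  (hν : ∀ k : ℕ, Integrable (fun x => x ^ k) ν)
  (hmean : ∫ x, x ∂ν = 0) (hsq : ∫ x, x ^ 2 ∂ν = 1)
include hmean hsq

lemma evalIntegral_inv_genericUnitLT_sq (i j : Fin n) :
    evalIntegral ν hν ((genericUnitLT n)⁻¹ i j ^ 2) = (if i = j then 1 else 0) ^ 2 +
      ∑ k : {k // k < i}, evalIntegral ν hν ((genericUnitLT n)⁻¹ k j ^ 2) := by
  rw [inv_genericUnitLT_apply n i j]
  refine evalIntegral_sq_C_sub_sum_X_mul hν hmean hsq (fun k l hkl => ?_) (fun k l hk => ?_) _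
  · exact Subtype.ext (congrArg (fun p => p.1.2) hkl)
  · have hik : i ≤ l := mem_supported.mp (inv_genericUnitLT_mem_supported n l j) hk
    exact absurd l.2 (not_lt_of_ge hik)

lemma evalIntegral_sum_inv_genericUnitLT_sq (i : Fin n) :
    evalIntegral ν hν (∑ j, (genericUnitLT n)⁻¹ i j ^ 2) = 2 ^ (i : ℕ) := by
  induction i using WellFoundedLT.induction with
  | _ i ih =>
    have ih' (k : {k // k < i}) :
        ∑ j, evalIntegral ν hν ((genericUnitLT n)⁻¹ k j ^ 2) = 2 ^ (k : ℕ) := by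
      rw [← map_sum, ih k.1 k.2]
    rw [map_sum,
      Fintype.sum_congr _ _ fun j => evalIntegral_inv_genericUnitLT_sq n hν hmean hsq i j,
      Finset.sum_add_distrib, Finset.sum_comm, Fintype.sum_congr _ _ ih', Fin.sum_two_pow_lt]
    simp

end GenericUnitLT

end MvPolynomial

open MvPolynomial in
theorem expected_sq_frobNorm_inv_unitLT_general (n : ℕ) :
    ∫ g, (frobNorm ((unitLT n g)⁻¹))^2 ∂(gaussianUnitLT n) = 2^n - 1 := by
  have hfrob (g : {p : Fin n × Fin n // p.2 < p.1} → ℝ) :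
      frobNorm ((unitLT n g)⁻¹) ^ 2 = eval g (∑ i, ∑ j, (genericUnitLT n)⁻¹ i j ^ 2) := by
    rw [frobNorm, Real.sq_sqrt (by positivity), inv_unitLT]
    simp
  have hν := integrable_pow_gaussianReal 0 1
  have hmean : ∫ x, x ∂gaussianReal 0 1 = 0 := integral_id_gaussianReal
  have hsq : ∫ x, x ^ 2 ∂gaussianReal 0 1 = 1 := by simp [integral_sq_gaussianReal]
  calc ∫ g, frobNorm ((unitLT n g)⁻¹) ^ 2 ∂gaussianUnitLT n
      = evalIntegral (gaussianReal 0 1) hν (∑ i, ∑ j, (genericUnitLT n)⁻¹ i j ^ 2) := by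
        simp_rw [hfrob]
        rfl
    _ = ∑ i : Fin n, (2 : ℝ) ^ (i : ℕ) := by
        rw [map_sum]
        exact Fintype.sum_congr _ _ (evalIntegral_sum_inv_genericUnitLT_sq n hν hmean hsq)
    _ = 2 ^ n - 1 := by
        rw [Fin.sum_univ_eq_sum_range (fun i => (2 : ℝ) ^ i), geom_sum_eq (by norm_num)]
        norm_num

/-- Theorem 4.3: for a random n×n unit lower triangular matrix L with
independent standard Gaussian strictly lower triangular entries,
E[‖L⁻¹‖_F²] = 2ⁿ − 1. -/
theorem expected_sq_frobNorm_inv_unitLT (n : ℕ) (hn : 1 ≤ n) :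
    ∫ g, (frobNorm ((unitLT n g)⁻¹))^2 ∂(gaussianUnitLT n) = 2^n - 1 :=
  expected_sq_frobNorm_inv_unitLT_general n
end
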